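/- For all finite simple graphs G and H, the domination number of the Cartesian product satisfies γ(G □ H) ≥ γ^i(G) · γ(H). -/

import Mathlib

/-- `A` dominates `B` in `G`: every vertex of `B` lies in the closed
neighborhood of some vertex of `A`. -/
def Dominates {V : Type*} (G : SimpleGraph V) (A B : Finset V) : Prop :=
  ∀ b ∈ B, ∃ a ∈ A, a = b ∨ G.Adj a b

/-- `γ_G(B)`: the minimum cardinality of a set of vertices dominating `B`. -/
noncomputable def domNum {V : Type*} (G : SimpleGraph V) (B : Finset V) : ℕ :=
  sInf {n | ∃ A : Finset V, A.card = n ∧ Dominates G A B}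

/-- The domination number `γ(G)`. -/
noncomputable def gamma {V : Type*} [Fintype V] (G : SimpleGraph V) : ℕ :=
  domNum G Finset.univ

/-- `A` is an independent set in `G`. -/
def IndepIn {V : Type*} (G : SimpleGraph V) (A : Finset V) : Prop :=
  ∀ x ∈ A, ∀ y ∈ A, ¬ G.Adj x y

/-- The independence-domination number `γ^i(G)`. -/
noncomputable def gammaI {V : Type*} (G : SimpleGraph V) : ℕ :=
  sSup {n | ∃ A : Finset V, IndepIn G A ∧ domNum G A = n}

/-!
Fix an independent set `A` of `G` with `γ_G(A) = γ^i(G)` and a minimum dominating set `D` of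
`G □ H`, and let `Z a` be the set of `w` such that `(a, w)` has a `D`-neighbour `(g, w)`. The
other vertices of the fibre `{a} × W` are dominated within it, so the slice of `D` at `a`
dominates `W \ Z a` in `H`; by independence the neighbours `g` lie outside `A`, so the slice of
`D` on `(V \ A) × {w}` dominates `{a ∈ A | w ∈ Z a}` in `G`. These slices are disjoint, so it
suffices to prove, for an arbitrary family `Z`,

  `γ_G(A) γ(H) ≤ ∑_{a ∈ A} γ_H(W \ Z a) + ∑_w γ_G({a ∈ A | w ∈ Z a})`.

Take a minimum dominating set `T` of `H` and send each `w` to a dominator `r w ∈ T`. For each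
`t ∈ T`, `A` is covered by the sets `{a ∈ A | w ∈ Z a}` with `r w = t` and by the `a` for which
`Z a` misses the whole fibre `r⁻¹ t`. For fixed `a`, the `t` whose fibre misses `Z a` can be
replaced in `T` by a dominating set of `W \ Z a`, so there are at most `γ_H(W \ Z a)` of them.
Summing over `t ∈ T` gives the inequality.
-/

open Finset

section Domination

variable {V : Type*} (G : SimpleGraph V)

theorem dominates_self (B : Finset V) : Dominates G B B :=
  fun b hb => ⟨b, hb, .inl rfl⟩

variable {G}

theorem Dominates.union [DecidableEq V] {A A' B B' : Finset V} (h : Dominates G A B)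
    (h' : Dominates G A' B') : Dominates G (A ∪ A') (B ∪ B') := by
  intro b hb
  rcases mem_union.1 hb with hb | hb
  · obtain ⟨a, ha, hab⟩ := h b hb
    exact ⟨a, mem_union_left _ ha, hab⟩
  · obtain ⟨a, ha, hab⟩ := h' b hb
    exact ⟨a, mem_union_right _ ha, hab⟩

theorem Dominates.domNum_le {A B : Finset V} (h : Dominates G A B) : domNum G B ≤ #A :=
  Nat.sInf_le ⟨A, rfl, h⟩

variable (G)

theorem exists_dominates_card_eq_domNum (B : Finset V) :
    ∃ A : Finset V, #A = domNum G B ∧ Dominates G A B :=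
  Nat.sInf_mem (s := {n | ∃ A : Finset V, #A = n ∧ Dominates G A B})
    ⟨#B, B, rfl, dominates_self G B⟩

theorem domNum_le_card (B : Finset V) : domNum G B ≤ #B :=
  (dominates_self G B).domNum_le

theorem domNum_mono {B C : Finset V} (h : B ⊆ C) : domNum G B ≤ domNum G C := by
  obtain ⟨A, hA, hAC⟩ := exists_dominates_card_eq_domNum G C
  exact hA ▸ Dominates.domNum_le fun b hb => hAC b (h hb)

theorem domNum_union_le [DecidableEq V] (B C : Finset V) :
    domNum G (B ∪ C) ≤ domNum G B + domNum G C := by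
  obtain ⟨A, hA, hAB⟩ := exists_dominates_card_eq_domNum G B
  obtain ⟨A', hA', hAC⟩ := exists_dominates_card_eq_domNum G C
  calc domNum G (B ∪ C) ≤ #(A ∪ A') := (hAB.union hAC).domNum_le
    _ ≤ domNum G B + domNum G C := hA ▸ hA' ▸ card_union_le A A'

theorem domNum_biUnion_le [DecidableEq V] {ι : Type*} (s : Finset ι) (B : ι → Finset V) :
    domNum G (s.biUnion B) ≤ ∑ i ∈ s, domNum G (B i) := by
  choose A hA hAB using fun i => exists_dominates_card_eq_domNum G (B i)
  have hdom : Dominates G (s.biUnion A) (s.biUnion B) := by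
    intro b hb
    obtain ⟨i, hi, hbi⟩ := mem_biUnion.1 hb
    obtain ⟨a, ha, hab⟩ := hAB i b hbi
    exact ⟨a, mem_biUnion.2 ⟨i, hi, ha⟩, hab⟩
  calc domNum G (s.biUnion B) ≤ #(s.biUnion A) := hdom.domNum_le
    _ ≤ ∑ i ∈ s, #(A i) := card_biUnion_le
    _ = ∑ i ∈ s, domNum G (B i) := sum_congr rfl fun i _ => hA i

theorem exists_indepIn_domNum_eq_gammaI [Finite V] :
    ∃ A : Finset V, IndepIn G A ∧ domNum G A = gammaI G := by
  have := Fintype.ofFinite V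
  refine Nat.sSup_mem (s := {n | ∃ A : Finset V, IndepIn G A ∧ domNum G A = n})
    ⟨domNum G ∅, ∅, by simp [IndepIn], rfl⟩ ⟨Fintype.card V, ?_⟩
  rintro n ⟨A, -, rfl⟩
  exact (domNum_le_card G A).trans (card_le_univ A)

end Domination

section Counting

variable {V W : Type*} (G : SimpleGraph V) (H : SimpleGraph W)

theorem card_filter_fiber_subset_le_domNum [Fintype W] [DecidableEq W] {T : Finset W}
    (hT : #T = gamma H) {r : W → W} (hrT : ∀ w, r w ∈ T) (hr : ∀ w, r w = w ∨ H.Adj (r w) w)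
    (Y : Finset W) : #{t ∈ T | ∀ w, r w = t → w ∈ Y} ≤ domNum H Y := by
  set full := {t ∈ T | ∀ w, r w = t → w ∈ Y}
  obtain ⟨S, hS, hSY⟩ := exists_dominates_card_eq_domNum H Y
  have hdom : Dominates H (S ∪ (T \ full)) univ := by
    intro w _
    by_cases hw : r w ∈ full
    · obtain ⟨s, hs, hsw⟩ := hSY w ((mem_filter.1 hw).2 w rfl)
      exact ⟨s, mem_union_left _ hs, hsw⟩
    · exact ⟨r w, mem_union_right _ (mem_sdiff.2 ⟨hrT w, hw⟩), hr w⟩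
  have hcard : gamma H ≤ #S + (#T - #full) :=
    calc gamma H ≤ #(S ∪ (T \ full)) := hdom.domNum_le
      _ ≤ #S + #(T \ full) := card_union_le _ _
      _ = #S + (#T - #full) := by rw [card_sdiff_of_subset (filter_subset _ _)]
  have hfull : #full ≤ #T := card_le_card (filter_subset _ _)
  omega

theorem domNum_mul_gamma_le_sum [Fintype W] [DecidableEq W] (A : Finset V) (Z : V → Finset W) :
    domNum G A * gamma H ≤
      ∑ a ∈ A, domNum H (univ \ Z a) + ∑ w, domNum G {a ∈ A | w ∈ Z a} := by
  classical
  obtain ⟨T, hT, hTdom⟩ := exists_dominates_card_eq_domNum H univ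
  choose r hrT hr using fun w => hTdom w (mem_univ w)
  let misses (a : V) (t : W) : Prop := ∀ w, r w = t → w ∈ univ \ Z a
  have hfiber (t : W) : domNum G A ≤
      ∑ w ∈ {w | r w = t}, domNum G {a ∈ A | w ∈ Z a} + #{a ∈ A | misses a t} := by
    have hcover : A ⊆ ({w | r w = t} : Finset W).biUnion (fun w => {a ∈ A | w ∈ Z a}) ∪
        {a ∈ A | misses a t} := by
      intro a ha
      by_cases h : misses a t
      · exact mem_union_right _ (mem_filter.2 ⟨ha, h⟩)
      · simp only [misses, mem_sdiff, mem_univ, true_and, not_forall, not_not] at h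
        obtain ⟨w, hwt, hwZ⟩ := h
        exact mem_union_left _ (mem_biUnion.2 ⟨w, by simpa using hwt, mem_filter.2 ⟨ha, hwZ⟩⟩)
    calc domNum G A ≤ domNum G (_ ∪ _) := domNum_mono G hcover
      _ ≤ _ := domNum_union_le G _ _
      _ ≤ _ := add_le_add (domNum_biUnion_le G _ _) (domNum_le_card G _)
  calc domNum G A * gamma H = ∑ _t ∈ T, domNum G A := by simp [hT, gamma, mul_comm]
    _ ≤ ∑ t ∈ T, (∑ w ∈ {w | r w = t}, domNum G {a ∈ A | w ∈ Z a} + #{a ∈ A | misses a t}) :=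
      sum_le_sum fun t _ => hfiber t
    _ = ∑ w, domNum G {a ∈ A | w ∈ Z a} + ∑ a ∈ A, #{t ∈ T | misses a t} := by
      rw [sum_add_distrib, sum_fiberwise_of_maps_to fun w _ => hrT w]
      congr 1
      exact (sum_card_bipartiteAbove_eq_sum_card_bipartiteBelow misses).symm
    _ ≤ _ := by
      rw [add_comm]
      gcongr with a
      exact card_filter_fiber_subset_le_domNum H hT hrT hr _

end Counting

section BoxProduct

variable {V W : Type*} {G : SimpleGraph V} {H : SimpleGraph W}

theorem IndepIn.dominates_filter_compl [Fintype V] [DecidableEq V] {A B : Finset V}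
    (hA : IndepIn G A) (hBA : B ⊆ A) (P : V → Prop) [DecidablePred P]
    (hB : ∀ b ∈ B, ∃ g, G.Adj g b ∧ P g) : Dominates G {g ∈ Aᶜ | P g} B := by
  intro b hb
  obtain ⟨g, hgb, hg⟩ := hB b hb
  have hgA : g ∉ A := fun hgA => hA g hgA b (hBA hb) hgb
  exact ⟨g, mem_filter.2 ⟨mem_compl.2 hgA, hg⟩, .inr hgb⟩

theorem Dominates.slice_of_boxProd [Fintype V] [Fintype W] [DecidableEq V] [DecidableEq W]
    {D : Finset (V × W)} (hD : Dominates (G □ H) D univ) (a : V) {B : Finset W}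
    (hB : ∀ w ∈ B, ∀ g, G.Adj g a → (g, w) ∉ D) : Dominates H {w | (a, w) ∈ D} B := by
  intro w hw
  obtain ⟨⟨g, u⟩, hgu, h⟩ := hD (a, w) (mem_univ _)
  simp only [SimpleGraph.boxProd_adj] at h
  rcases h with h | ⟨hga, huw⟩ | ⟨huw, hga⟩
  · obtain ⟨rfl, rfl⟩ := Prod.mk.inj h
    exact ⟨u, by simpa using hgu, .inl rfl⟩
  · exact absurd (huw ▸ hgu) (hB w hw g hga)
  · exact ⟨u, by simpa [← hga] using hgu, .inr huw⟩

theorem card_eq_sum_card_slices [Fintype V] [Fintype W] [DecidableEq V] [DecidableEq W]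
    (D : Finset (V × W)) (A : Finset V) :
    #D = ∑ a ∈ A, #{w | (a, w) ∈ D} + ∑ w, #{g ∈ Aᶜ | (g, w) ∈ D} := by
  calc #D = ∑ a, ∑ w, if (a, w) ∈ D then 1 else 0 := by
        rw [← Fintype.sum_prod_type', sum_boole]; simp
    _ = _ := by
      rw [← sum_add_sum_compl A, sum_comm (s := Aᶜ)]
      simp only [sum_boole, Nat.cast_id]

end BoxProduct

/-- For all finite graphs `G` and `H`, `γ(G □ H) ≥ γ^i(G) ⬝ γ(H)`. -/
theorem gamma_boxProd_ge {V W : Type*} [Fintype V] [Fintype W]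
    (G : SimpleGraph V) (H : SimpleGraph W) :
    gamma (G □ H) ≥ gammaI G * gamma H := by
  classical
  obtain ⟨A, hA, hAγ⟩ := exists_indepIn_domNum_eq_gammaI G
  obtain ⟨D, hD, hDdom⟩ := exists_dominates_card_eq_domNum (G □ H) univ
  let Z (a : V) : Finset W := {w | ∃ g, G.Adj g a ∧ (g, w) ∈ D}
  calc gammaI G * gamma H = domNum G A * gamma H := by rw [hAγ]
    _ ≤ ∑ a ∈ A, domNum H (univ \ Z a) + ∑ w, domNum G {a ∈ A | w ∈ Z a} :=
      domNum_mul_gamma_le_sum G H A Z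
    _ ≤ ∑ a ∈ A, #{w | (a, w) ∈ D} + ∑ w, #{g ∈ Aᶜ | (g, w) ∈ D} := by
      gcongr with a _ w
      · refine (hDdom.slice_of_boxProd a fun w hw g hga hgw => ?_).domNum_le
        simp only [Z, mem_sdiff, mem_filter] at hw
        exact hw.2 ⟨mem_univ w, g, hga, hgw⟩
      · refine (hA.dominates_filter_compl (filter_subset _ _) _ fun b hb => ?_).domNum_le
        simpa [Z] using (mem_filter.1 hb).2
    _ = gamma (G □ H) := by rw [← card_eq_sum_card_slices, hD]; rfl
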